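/- arXiv:0805.1252 — 2 statements merged into one kernel-verified Lean document; each statement's English description precedes it below -/
import Mathlib

section
/- Let n ≥ 1 and let Φ_B = {±e_i : 1 ≤ i ≤ n} ∪ {±e_j ± e_k : 1 ≤ j < k ≤ n} (all four sign combinations) be the set of roots of type B_n in ℝ^n, with dual lattice M = ℤ^n. Let F = {u ∈ ℝ^n : −1 ≤ ⟨u, v⟩ ≤ 1 for all v ∈ Φ_B}. Then for every odd integer q ≥ 3 and every w ∈ (1/q)M, there exists u ∈ (1/q)M with u − w ∈ M and u lying in the topological interior of F. (Consequently, every lattice polytope cut out by B_n is diagonally split for every odd q.) -/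
open Finset

/-- The `i`-th standard basis vector of `ℝ^n`. -/
noncomputable def stdBasis (n : ℕ) (i : Fin n) : Fin n → ℝ := fun j => if j = i then 1 else 0

/-- The standard inner product on `ℝ^n`. -/
noncomputable def innerProd {n : ℕ} (u v : Fin n → ℝ) : ℝ := ∑ i, u i * v i

/-- The roots of type `B_n`: `±e_i` and `±e_j ± e_k` for `j < k` (all four sign choices). -/
def typeB (n : ℕ) : Set (Fin n → ℝ) :=
  {v | ∃ i, v = stdBasis n i ∨ v = -stdBasis n i} ∪
  {v | ∃ j k, j < k ∧ ∃ ε δ : ℝ, (ε = 1 ∨ ε = -1) ∧ (δ = 1 ∨ δ = -1) ∧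
    v = ε • stdBasis n j + δ • stdBasis n k}

/-- The lattice `ℤ^n ⊆ ℝ^n`. -/
def intLattice (n : ℕ) : Set (Fin n → ℝ) := {u | ∀ i, ∃ m : ℤ, u i = m}

/-- The diagonal splitting polytope `F = {u | -1 ≤ ⟨u,v⟩ ≤ 1 for all v ∈ Φ}`. -/
def splitPolytope (n : ℕ) (Φ : Set (Fin n → ℝ)) : Set (Fin n → ℝ) :=
  {u | ∀ v ∈ Φ, -1 ≤ innerProd u v ∧ innerProd u v ≤ 1}

/-!
Take for `u` the coordinatewise fractional offset `w - round w`. Each coordinate of `u` lies in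
`(1/q)ℤ ∩ [-1/2, 1/2]`, and since `q` is odd it cannot be `±1/2`; so `u` lies in the open sup-norm
ball of radius `1/2`. Every root of `B_n` has at most two nonzero coordinates, both `±1`, hence
`|⟨u, v⟩| ≤ 2‖u‖∞`, and that ball lies inside the splitting polytope.
-/

lemma innerProd_stdBasis {n : ℕ} (x : Fin n → ℝ) (i : Fin n) :
    innerProd x (stdBasis n i) = x i := by
  simp [innerProd, stdBasis]

lemma innerProd_neg_right {n : ℕ} (x v : Fin n → ℝ) : innerProd x (-v) = -innerProd x v := by
  simp [innerProd]

lemma innerProd_smul_stdBasis_add {n : ℕ} (x : Fin n → ℝ) (ε δ : ℝ) (j k : Fin n) :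
    innerProd x (ε • stdBasis n j + δ • stdBasis n k) = ε * x j + δ * x k := by
  simp only [innerProd, stdBasis, Pi.add_apply, Pi.smul_apply, smul_eq_mul, mul_add, mul_ite,
    mul_one, mul_zero, sum_add_distrib, sum_ite_eq', mem_univ, if_true]
  ring

lemma abs_innerProd_le_two_mul_norm_of_mem_typeB {n : ℕ} (x : Fin n → ℝ) {v : Fin n → ℝ}
    (hv : v ∈ typeB n) : |innerProd x v| ≤ 2 * ‖x‖ := by
  have hx : ∀ i, |x i| ≤ ‖x‖ := norm_le_pi_norm x
  have hsign : ∀ ε : ℝ, (ε = 1 ∨ ε = -1) → |ε| = 1 := by rintro ε (rfl | rfl) <;> simp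
  rcases hv with ⟨i, rfl | rfl⟩ | ⟨j, k, -, ε, δ, hε, hδ, rfl⟩
  · rw [innerProd_stdBasis]
    linarith [hx i, norm_nonneg x]
  · rw [innerProd_neg_right, abs_neg, innerProd_stdBasis]
    linarith [hx i, norm_nonneg x]
  · rw [innerProd_smul_stdBasis_add]
    calc |ε * x j + δ * x k| ≤ |ε * x j| + |δ * x k| := abs_add_le _ _
      _ = |x j| + |x k| := by rw [abs_mul, abs_mul, hsign ε hε, hsign δ hδ, one_mul, one_mul]
      _ ≤ 2 * ‖x‖ := by linarith [hx j, hx k]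

lemma closedBall_half_subset_splitPolytope_typeB (n : ℕ) :
    Metric.closedBall (0 : Fin n → ℝ) (1 / 2) ⊆ splitPolytope n (typeB n) := by
  intro x hx v hv
  rw [mem_closedBall_zero_iff] at hx
  exact abs_le.mp ((abs_innerProd_le_two_mul_norm_of_mem_typeB x hv).trans (by linarith))

lemma ball_half_subset_interior_splitPolytope_typeB (n : ℕ) :
    Metric.ball (0 : Fin n → ℝ) (1 / 2) ⊆ interior (splitPolytope n (typeB n)) :=
  interior_maximal
    (Metric.ball_subset_closedBall.trans (closedBall_half_subset_splitPolytope_typeB n))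
    Metric.isOpen_ball

/-- `x - round x = ±1/2` would give `q = ±2 (m - q round x)`, an even number. -/
lemma abs_sub_round_lt_half_of_odd {q : ℤ} (hq : Odd q) {x : ℝ} {m : ℤ} (hx : (q : ℝ) * x = m) :
    |x - round x| < 1 / 2 := by
  refine (abs_sub_round x).lt_of_ne fun hhalf => Int.not_even_iff_odd.mpr hq ?_
  have hq_eq : (q : ℝ) * (2 * (x - round x)) = 2 * (m - q * round x) := by
    rw [← hx]; ring
  rcases (abs_eq (by norm_num : (0 : ℝ) ≤ 1 / 2)).mp hhalf with h | h
  · refine ⟨m - q * round x, ?_⟩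
    rw [h] at hq_eq
    exact_mod_cast (by linarith : (q : ℝ) = (m - q * round x) + (m - q * round x))
  · refine ⟨q * round x - m, ?_⟩
    rw [h] at hq_eq
    exact_mod_cast (by linarith : (q : ℝ) = (q * round x - m) + (q * round x - m))

theorem typeB_diagonally_split_general (n : ℕ) (q : ℤ) (hodd : Odd q)
    (w : Fin n → ℝ) (hw : (q : ℝ) • w ∈ intLattice n) :
    ∃ u : Fin n → ℝ, (q : ℝ) • u ∈ intLattice n ∧ u - w ∈ intLattice n ∧
      u ∈ interior (splitPolytope n (typeB n)) := by
  choose m hm using hw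
  simp only [Pi.smul_apply, smul_eq_mul] at hm
  refine ⟨fun i => w i - round (w i), fun i => ⟨m i - q * round (w i), ?_⟩,
    fun i => ⟨-round (w i), ?_⟩, ball_half_subset_interior_splitPolytope_typeB n ?_⟩
  · simp only [Pi.smul_apply, smul_eq_mul]
    push_cast
    rw [← hm i]
    ring
  · simp
  · rw [mem_ball_zero_iff, pi_norm_lt_iff (by norm_num)]
    exact fun i => abs_sub_round_lt_half_of_odd hodd (hm i)

/-- Every lattice polytope cut out by `B_n` is diagonally split for every odd `q ≥ 3`:
the interior of the diagonal splitting polytope of `B_n` contains a representative of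
every equivalence class in `(1/q)ℤ^n / ℤ^n`. -/
theorem typeB_diagonally_split (n : ℕ) (hn : 1 ≤ n) (q : ℤ) (hq : 3 ≤ q) (hodd : Odd q)
    (w : Fin n → ℝ) (hw : (q : ℝ) • w ∈ intLattice n) :
    ∃ u : Fin n → ℝ, (q : ℝ) • u ∈ intLattice n ∧ u - w ∈ intLattice n ∧
      u ∈ interior (splitPolytope n (typeB n)) :=
  typeB_diagonally_split_general n q hodd w hw
end

section
/- Let n ≥ 1 and let Φ_B = {±e_i : 1 ≤ i ≤ n} ∪ {±e_j ± e_k : 1 ≤ j < k ≤ n} (all four sign combinations) be the set of roots of type B_n in ℝ^n, with dual lattice M = ℤ^n. Let P ⊆ ℝ^n be a lattice polytope cut out by Φ_B: that is, P is the convex hull of a nonempty finite subset of M, and there exist a finite subset S ⊆ Φ_B and real numbers c_v (v ∈ S) with P = {x ∈ ℝ^n : ⟨x, v⟩ ≥ c_v for all v ∈ S}. Then P is normal: for every positive integer m, every point of M lying in the dilate m·P is a sum of m points of M ∩ P. -/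
/-!
Since the vertices of `P` are lattice points and roots take integral values on `ℤ^n`, the
right-hand sides `c_v` may be rounded up to integers. Given a lattice point `x ∈ (m+1)P`, let
`t = x/(m+1) ∈ P` and round `t` coordinatewise to a lattice point `y`. On a root `±e_i`, or on
`±e_j ± e_k` when at most one of `t_j, t_k` is a half-integer, the value moves by less than `1`;
otherwise it moves by an integer in `{-1, 0, 1}`. Breaking ties towards a lattice point `w ∈ P`
lying on every facet through `t` makes that move `0` on facets through `t`. Integrality then gives
`y ∈ P` and `x - y ∈ mP`, and induction on `m` finishes.
-/

open Finset Pointwise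

lemma stdBasis_eq_single (n : ℕ) (i : Fin n) : stdBasis n i = Pi.single i 1 := by
  ext j
  simp [stdBasis, Pi.single_apply]

lemma exists_int_eq_of_eq_one_or_eq_neg_one {ε : ℝ} (hε : ε = 1 ∨ ε = -1) : ∃ e : ℤ, ε = e := by
  rcases hε with rfl | rfl
  exacts [⟨1, by simp⟩, ⟨-1, by simp⟩]

lemma typeB_subset_intLattice (n : ℕ) : typeB n ⊆ intLattice n := by
  rintro v (⟨i, rfl | rfl⟩ | ⟨j, k, -, ε, δ, hε, hδ, rfl⟩) l <;> simp only [stdBasis_eq_single]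
  · exact ⟨if l = i then 1 else 0, by simp [Pi.single_apply]⟩
  · exact ⟨if l = i then -1 else 0, by split_ifs <;> simp [*]⟩
  · obtain ⟨e, rfl⟩ := exists_int_eq_of_eq_one_or_eq_neg_one hε
    obtain ⟨d, rfl⟩ := exists_int_eq_of_eq_one_or_eq_neg_one hδ
    exact ⟨(if l = j then e else 0) + (if l = k then d else 0), by
      simp [Pi.single_apply, apply_ite (Int.cast : ℤ → ℝ)]⟩

lemma sub_mem_intLattice {n : ℕ} {u v : Fin n → ℝ} (hu : u ∈ intLattice n)
    (hv : v ∈ intLattice n) : u - v ∈ intLattice n := fun i => by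
  obtain ⟨a, ha⟩ := hu i
  obtain ⟨b, hb⟩ := hv i
  exact ⟨a - b, by simp [ha, hb]⟩

lemma exists_int_dotProduct_eq {n : ℕ} {u v : Fin n → ℝ} (hu : u ∈ intLattice n)
    (hv : v ∈ intLattice n) : ∃ z : ℤ, u ⬝ᵥ v = z := by
  choose a ha using hu
  choose b hb using hv
  exact ⟨∑ i, a i * b i, by simp [dotProduct, ha, hb]⟩

def polyhedron {n : ℕ} (S : Finset (Fin n → ℝ)) (c : (Fin n → ℝ) → ℝ) : Set (Fin n → ℝ) :=
  {x | ∀ v ∈ S, c v ≤ x ⬝ᵥ v}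

lemma convex_polyhedron {n : ℕ} (S : Finset (Fin n → ℝ)) (c : (Fin n → ℝ) → ℝ) :
    Convex ℝ (polyhedron S c) := by
  intro x hx y hy a b ha hb hab v hv
  calc c v = a * c v + b * c v := by rw [← add_mul, hab, one_mul]
    _ ≤ a * x ⬝ᵥ v + b * y ⬝ᵥ v := by gcongr <;> [exact hx v hv; exact hy v hv]
    _ = (a • x + b • y) ⬝ᵥ v := by simp [add_dotProduct, smul_dotProduct]

lemma polyhedron_mono {n : ℕ} (S : Finset (Fin n → ℝ)) {c c' : (Fin n → ℝ) → ℝ}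
    (h : ∀ v, c v ≤ c' v) : polyhedron S c' ⊆ polyhedron S c :=
  fun _ hx v hv => (h v).trans (hx v hv)

lemma mem_smul_polyhedron_iff {n : ℕ} {S : Finset (Fin n → ℝ)} {c : (Fin n → ℝ) → ℝ}
    {a : ℝ} (ha : 0 < a) {x : Fin n → ℝ} :
    x ∈ a • polyhedron S c ↔ ∀ v ∈ S, a * c v ≤ x ⬝ᵥ v := by
  rw [Set.mem_smul_set_iff_inv_smul_mem₀ ha.ne']
  simp only [polyhedron, Set.mem_ofPred_eq, smul_dotProduct, smul_eq_mul, le_inv_mul_iff₀ ha]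

lemma convexHull_eq_polyhedron_ceil {n : ℕ} {S : Finset (Fin n → ℝ)} (hS : ↑S ⊆ typeB n)
    {V : Set (Fin n → ℝ)} (hV : V ⊆ intLattice n) {c : (Fin n → ℝ) → ℝ}
    (h : convexHull ℝ V = polyhedron S c) :
    convexHull ℝ V = polyhedron S (fun v => ⌈c v⌉) := by
  refine (convexHull_min (fun u hu v hv => ?_) (convex_polyhedron _ _)).antisymm
    (h ▸ polyhedron_mono S fun v => Int.le_ceil (c v))
  obtain ⟨z, hz⟩ := exists_int_dotProduct_eq (hV hu) (typeB_subset_intLattice n (hS hv))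
  have hcu : c v ≤ u ⬝ᵥ v := (h ▸ subset_convexHull ℝ V hu : u ∈ polyhedron S c) v hv
  rw [hz] at hcu
  show (⌈c v⌉ : ℝ) ≤ u ⬝ᵥ v
  rw [hz]
  exact_mod_cast Int.ceil_le.mpr hcu

lemma exists_mem_forall_eq_of_mem_convexHull {E : Type*} [AddCommGroup E] [Module ℝ E]
    {V : Set E} {t : E} (ht : t ∈ convexHull ℝ V) :
    ∃ w ∈ V, ∀ (f : E →ₗ[ℝ] ℝ) (c : ℝ), (∀ u ∈ V, c ≤ f u) → f t = c → f w = c := by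
  rw [_root_.convexHull_eq] at ht
  obtain ⟨ι, s, a, z, ha0, ha1, hzV, rfl⟩ := ht
  obtain ⟨i, hi, hai⟩ : ∃ i ∈ s, 0 < a i := by
    by_contra! h
    linarith [Finset.sum_nonpos h]
  refine ⟨z i, hzV i hi, fun f c hc hft => ?_⟩
  have hsum : ∑ j ∈ s, a j * (f (z j) - c) = 0 := by
    rw [s.centerMass_eq_of_sum_1 z ha1, map_sum] at hft
    simp only [map_smul, smul_eq_mul] at hft
    simp only [mul_sub, Finset.sum_sub_distrib, ← Finset.sum_mul, ha1, hft, one_mul, sub_self]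
  have hterm := (Finset.sum_eq_zero_iff_of_nonneg fun j hj =>
    mul_nonneg (ha0 j hj) (sub_nonneg.2 (hc _ (hzV j hj)))).1 hsum i hi
  linarith [(mul_eq_zero.1 hterm).resolve_left hai.ne']

/-- `r` is the error `y - t` of rounding a real `t` to a nearest integer `y`, a tie being broken
towards the side of `t` on which the displacement `s` points. -/
def IsRoundingErrorToward (r s : ℝ) : Prop :=
  |r| < 1 / 2 ∨ (|r| = 1 / 2 ∧ 0 < r * s)

lemma exists_int_isRoundingErrorToward (t : ℝ) (w : ℤ) :
    ∃ y : ℤ, IsRoundingErrorToward (y - t) (w - t) := by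
  have h0 := Int.floor_le t
  have h1 := Int.lt_floor_add_one t
  rcases lt_trichotomy (t - ⌊t⌋) (1 / 2) with h | h | h
  · exact ⟨⌊t⌋, Or.inl (abs_lt.2 ⟨by linarith, by linarith⟩)⟩
  · rcases le_or_gt w ⌊t⌋ with hw | hw
    · have hw' : (w : ℝ) ≤ ⌊t⌋ := by exact_mod_cast hw
      refine ⟨⌊t⌋, Or.inr ⟨?_, by nlinarith⟩⟩
      rw [show (⌊t⌋ : ℝ) - t = -(1 / 2) by linarith, abs_neg, abs_of_pos one_half_pos]
    · have hw' : (⌊t⌋ : ℝ) + 1 ≤ w := by exact_mod_cast hw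
      refine ⟨⌊t⌋ + 1, Or.inr ⟨?_, by push_cast; nlinarith⟩⟩
      rw [show ((⌊t⌋ + 1 : ℤ) : ℝ) - t = 1 / 2 by push_cast; linarith, abs_of_pos one_half_pos]
  · exact ⟨⌊t⌋ + 1, Or.inl (abs_lt.2 ⟨by push_cast; linarith, by push_cast; linarith⟩)⟩

lemma IsRoundingErrorToward.mul_sign {r s ε : ℝ} (h : IsRoundingErrorToward r s)
    (hε : ε = 1 ∨ ε = -1) : IsRoundingErrorToward (ε * r) (ε * s) := by
  rcases hε with rfl | rfl
  · simpa using h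
  · simpa [IsRoundingErrorToward] using h

/-- `d` is the error made on a root functional by rounding; `s` is the displacement of that
functional towards a reference lattice point. -/
def IsAdmissibleError (d s : ℝ) : Prop :=
  |d| < 1 ∨ ((∃ z : ℤ, |z| ≤ 1 ∧ d = z) ∧ (s = 0 → d = 0))

lemma IsRoundingErrorToward.isAdmissibleError {r s : ℝ} (h : IsRoundingErrorToward r s) :
    IsAdmissibleError r s := by
  left
  rcases h with h | ⟨h, -⟩ <;> linarith

lemma IsRoundingErrorToward.add {a b p q : ℝ} (ha : IsRoundingErrorToward a p)
    (hb : IsRoundingErrorToward b q) : IsAdmissibleError (a + b) (p + q) := by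
  rcases ha with ha | ⟨ha, hap⟩
  · exact Or.inl ((abs_add_le a b).trans_lt (by rcases hb with hb | ⟨hb, -⟩ <;> linarith))
  rcases hb with hb | ⟨hb, hbq⟩
  · exact Or.inl ((abs_add_le a b).trans_lt (by linarith))
  -- two ties: the errors `±1/2` cancel exactly when `p` and `q` have opposite signs
  right
  rcases (abs_eq one_half_pos.le).1 ha with rfl | rfl <;>
    rcases (abs_eq one_half_pos.le).1 hb with rfl | rfl
  · exact ⟨⟨1, by norm_num⟩, fun h => by nlinarith⟩
  · exact ⟨⟨0, by norm_num⟩, fun _ => by norm_num⟩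
  · exact ⟨⟨0, by norm_num⟩, fun _ => by norm_num⟩
  · exact ⟨⟨-1, by norm_num⟩, fun h => by nlinarith⟩

lemma isAdmissibleError_dotProduct_of_mem_typeB {n : ℕ} {v : Fin n → ℝ} (hv : v ∈ typeB n)
    {r s : Fin n → ℝ} (h : ∀ i, IsRoundingErrorToward (r i) (s i)) :
    IsAdmissibleError (r ⬝ᵥ v) (s ⬝ᵥ v) := by
  rcases hv with ⟨i, rfl | rfl⟩ | ⟨j, k, -, ε, δ, hε, hδ, rfl⟩ <;>
    simp only [stdBasis_eq_single, dotProduct_neg, dotProduct_add, dotProduct_smul,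
      dotProduct_single_one, smul_eq_mul]
  · exact (h i).isAdmissibleError
  · simpa using ((h i).mul_sign (Or.inr rfl)).isAdmissibleError
  · exact ((h j).mul_sign hε).add ((h k).mul_sign hδ)

lemma le_and_le_sub_of_isAdmissibleError {a c X : ℤ} {T s : ℝ} {m : ℕ} (hm : 1 ≤ m)
    (hX : (X : ℝ) = (m + 1) * T) (hc : (c : ℝ) ≤ T) (hs : T = c → s = 0)
    (hd : IsAdmissibleError (a - T) s) : c ≤ a ∧ m * c ≤ X - a := by
  rcases hd with hd | ⟨⟨z, hz, hd⟩, htight⟩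
  · obtain ⟨hlo, hhi⟩ := abs_lt.1 hd
    have hmT : (m : ℝ) * c ≤ m * T := by gcongr
    have h1 : (c : ℝ) < a + 1 := by linarith
    have h2 : ((m * c : ℤ) : ℝ) < (X - a : ℤ) + 1 := by push_cast; linarith
    constructor
    · exact Int.lt_add_one_iff.1 (by exact_mod_cast h1)
    · exact Int.lt_add_one_iff.1 (by exact_mod_cast h2)
  · have hT : T = ((a - z : ℤ) : ℝ) := by push_cast; linarith
    rw [hT] at hX hc hs
    have hX' : X = (m + 1) * (a - z) := by exact_mod_cast hX
    have hc' : c ≤ a - z := by exact_mod_cast hc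
    have hz' := abs_le.1 hz
    rcases hc'.eq_or_lt with heq | hlt
    · have hz0 : z = 0 := by exact_mod_cast (hd ▸ htight (hs (by rw [heq])))
      subst hz0
      constructor <;> nlinarith
    · constructor <;> nlinarith

lemma exists_sub_mem_smul_of_mem_smul {n : ℕ} {P V : Set (Fin n → ℝ)} {S : Finset (Fin n → ℝ)}
    {c : (Fin n → ℝ) → ℤ} (hS : ↑S ⊆ typeB n) (hV : V ⊆ intLattice n)
    (hPV : P = convexHull ℝ V) (hPc : P = polyhedron S fun v => c v) {m : ℕ} (hm : 1 ≤ m)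
    {x : Fin n → ℝ} (hx : x ∈ intLattice n) (hxm : x ∈ ((m + 1 : ℕ) : ℝ) • P) :
    ∃ y ∈ intLattice n, y ∈ P ∧ x - y ∈ (m : ℝ) • P := by
  set t := ((m + 1 : ℕ) : ℝ)⁻¹ • x with ht_def
  have ht : t ∈ P := (Set.mem_smul_set_iff_inv_smul_mem₀ (by positivity) _ _).1 hxm
  have hxt : x = ((m + 1 : ℕ) : ℝ) • t := by rw [ht_def, smul_inv_smul₀ (by positivity)]
  have htc : t ∈ polyhedron S _ := hPc ▸ ht
  -- the lattice point `w` lies on every facet of `P` through `t`; ties are rounded towards it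
  obtain ⟨w, hwV, hw⟩ := exists_mem_forall_eq_of_mem_convexHull (hPV ▸ ht)
  choose k hk using hV hwV
  choose Y hY using fun i => exists_int_isRoundingErrorToward (t i) (k i)
  set y : Fin n → ℝ := fun i => (Y i : ℝ)
  have hyZ : y ∈ intLattice n := fun i => ⟨Y i, rfl⟩
  have key : ∀ v ∈ S, (c v : ℝ) ≤ y ⬝ᵥ v ∧ (m : ℝ) * c v ≤ (x - y) ⬝ᵥ v := by
    intro v hv
    have hvZ := typeB_subset_intLattice n (hS hv)
    obtain ⟨a, ha⟩ := exists_int_dotProduct_eq hyZ hvZ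
    obtain ⟨X, hX⟩ := exists_int_dotProduct_eq hx hvZ
    have hXt : (X : ℝ) = (m + 1) * t ⬝ᵥ v := by
      rw [← hX, hxt, smul_dotProduct, smul_eq_mul]; push_cast; ring
    have hVc : ∀ u ∈ V, (c v : ℝ) ≤ (dotProductBilin ℝ ℝ).flip v u := fun u hu =>
      (hPc ▸ hPV ▸ subset_convexHull ℝ V hu : u ∈ polyhedron S _) v hv
    have hs : t ⬝ᵥ v = c v → (w - t) ⬝ᵥ v = 0 := fun h => by
      have := hw _ _ hVc h
      simp only [LinearMap.flip_apply, dotProductBilin_apply_apply] at this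
      rw [sub_dotProduct, this, h, sub_self]
    have hd := isAdmissibleError_dotProduct_of_mem_typeB (hS hv) (r := y - t) (s := w - t)
      fun i => by simpa [y, hk] using hY i
    rw [sub_dotProduct, ha] at hd
    obtain ⟨h1, h2⟩ := le_and_le_sub_of_isAdmissibleError hm hXt (htc v hv) hs hd
    rw [sub_dotProduct, ha, hX]
    exact ⟨by exact_mod_cast h1, by exact_mod_cast h2⟩
  refine ⟨y, hyZ, hPc ▸ fun v hv => (key v hv).1, ?_⟩
  rw [hPc, mem_smul_polyhedron_iff (by positivity)]
  exact fun v hv => (key v hv).2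

lemma exists_sum_eq_of_mem_smul {n : ℕ} {P : Set (Fin n → ℝ)}
    (hstep : ∀ m : ℕ, 1 ≤ m → ∀ x ∈ intLattice n, x ∈ ((m + 1 : ℕ) : ℝ) • P →
      ∃ y ∈ intLattice n, y ∈ P ∧ x - y ∈ (m : ℝ) • P)
    {m : ℕ} (hm : 0 < m) {x : Fin n → ℝ} (hx : x ∈ intLattice n) (hxm : x ∈ (m : ℝ) • P) :
    ∃ f : Fin m → (Fin n → ℝ), (∀ j, f j ∈ intLattice n ∧ f j ∈ P) ∧ x = ∑ j, f j := by
  induction m, hm using Nat.le_induction generalizing x with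
  | base => exact ⟨fun _ => x, fun _ => ⟨hx, by simpa using hxm⟩, by simp⟩
  | succ m hm ih =>
    obtain ⟨y, hyZ, hyP, hxy⟩ := hstep m hm x hx hxm
    obtain ⟨f, hf, hsum⟩ := ih (sub_mem_intLattice hx hyZ) hxy
    refine ⟨Fin.cons y f, Fin.cases ⟨hyZ, hyP⟩ hf, ?_⟩
    rw [Fin.sum_cons, ← hsum, add_sub_cancel]

theorem typeB_polytope_normal_general (n : ℕ) (P : Set (Fin n → ℝ))
    (hpoly : ∃ V : Set (Fin n → ℝ), V.Finite ∧ V.Nonempty ∧ V ⊆ intLattice n ∧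
      P = convexHull ℝ V)
    (hcut : ∃ S : Finset (Fin n → ℝ), ↑S ⊆ typeB n ∧ ∃ c : (Fin n → ℝ) → ℝ,
      P = {x | ∀ v ∈ S, c v ≤ innerProd x v})
    (m : ℕ) (hm : 0 < m) (x : Fin n → ℝ) (hx : x ∈ intLattice n) (hxm : x ∈ (m : ℝ) • P) :
    ∃ f : Fin m → (Fin n → ℝ), (∀ j, f j ∈ intLattice n ∧ f j ∈ P) ∧ x = ∑ j, f j := by
  obtain ⟨V, -, -, hV, hPV⟩ := hpoly
  obtain ⟨S, hS, c, hPc⟩ := hcut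
  have hPc' : P = polyhedron S fun v => ⌈c v⌉ :=
    hPV ▸ convexHull_eq_polyhedron_ceil hS hV (hPV ▸ hPc)
  exact exists_sum_eq_of_mem_smul
    (fun k hk _ => exists_sub_mem_smul_of_mem_smul hS hV hPV hPc' hk) hm hx hxm

/-- Every lattice polytope cut out by the root system `B_n` is normal: every lattice
point of `m·P` is a sum of `m` lattice points of `P`. -/
theorem typeB_polytope_normal (n : ℕ) (hn : 1 ≤ n) (P : Set (Fin n → ℝ))
    (hpoly : ∃ V : Set (Fin n → ℝ), V.Finite ∧ V.Nonempty ∧ V ⊆ intLattice n ∧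
      P = convexHull ℝ V)
    (hcut : ∃ S : Finset (Fin n → ℝ), ↑S ⊆ typeB n ∧ ∃ c : (Fin n → ℝ) → ℝ,
      P = {x | ∀ v ∈ S, c v ≤ innerProd x v})
    (m : ℕ) (hm : 0 < m) (x : Fin n → ℝ) (hx : x ∈ intLattice n) (hxm : x ∈ (m : ℝ) • P) :
    ∃ f : Fin m → (Fin n → ℝ), (∀ j, f j ∈ intLattice n ∧ f j ∈ P) ∧ x = ∑ j, f j :=
  typeB_polytope_normal_general n P hpoly hcut m hm x hx hxm
end
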